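/- Let r > 0, let μ be a finite Borel measure on ℝ with μ(ℝ \ [−r, 0]) = 0, let p ≥ 1 be a real number, let ψ : ℝ → ℝ be measurable, and let α > 0. Then ∫₀^{α} ( ∫_{θ ∈ [−r,0]} |ψ(t + θ)| · 1_{t + θ ≥ 0} dμ(θ) )^p dt ≤ μ([max(−α, −r), 0])^p · ∫₀^{α} |ψ(s)|^p ds, where all integrals are Lebesgue integrals of nonnegative measurable functions with values in [0, ∞]. In particular the constant μ([max(−α,−r), 0])^p tends to (μ({0}))^p as α → 0⁺. -/

import Mathlib

/-!
For `t ∈ [0, α]` only `θ ∈ [-α, 0]` contribute to `∫ |ψ(t + θ)| 1_{t+θ≥0} dμ(θ)`, so `μ` may be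
replaced by its restriction `ν` to that window. Hölder's inequality for the finite measure `ν`
bounds the `p`-th power of the inner integral by `ν(ℝ)^(p-1) ∫ |ψ(t + θ)|^p 1_{t+θ≥0} dν(θ)`;
after Tonelli, each shifted integral over `t ∈ [0, α]` is at most `∫₀^α |ψ|^p` because `θ ≤ 0`.
The limit is squeezed between `μ {0}` and the measures of the symmetric intervals `[-a, a]`.
-/

open MeasureTheory Filter Topology Set
open scoped ENNReal

lemma lintegral_rpow_le_measure_univ_rpow_mul {X : Type*} [MeasurableSpace X] (ν : Measure X)
    {f : X → ℝ≥0∞} (hf : AEMeasurable f ν) {p : ℝ} (hp : 1 ≤ p) :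
    (∫⁻ x, f x ∂ν) ^ p ≤ ν univ ^ (p - 1) * ∫⁻ x, f x ^ p ∂ν := by
  rcases hp.eq_or_lt with rfl | hp
  · simp
  have hp0 : 0 < p := zero_lt_one.trans hp
  set q := p.conjExponent with hq
  have hpq : p.HolderConjugate q := .conjExponent hp
  have hqp : 1 / q * p = p - 1 := by
    rw [hq, Real.conjExponent]
    field_simp
  have holder := ENNReal.lintegral_mul_le_Lp_mul_Lq ν hpq hf (aemeasurable_const (b := 1))
  simp only [Pi.mul_apply, mul_one, ENNReal.one_rpow, lintegral_const, one_mul] at holder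
  calc (∫⁻ x, f x ∂ν) ^ p
      ≤ ((∫⁻ x, f x ^ p ∂ν) ^ (1 / p) * ν univ ^ (1 / q)) ^ p := by gcongr
    _ = ν univ ^ (p - 1) * ∫⁻ x, f x ^ p ∂ν := by
      rw [ENNReal.mul_rpow_of_nonneg _ _ hp0.le, ← ENNReal.rpow_mul, ← ENNReal.rpow_mul,
        one_div_mul_cancel hp0.ne', ENNReal.rpow_one, hqp, mul_comm]

lemma setLIntegral_Icc_indicator_Ici_add_le (h : ℝ → ℝ≥0∞) {θ : ℝ} (hθ : θ ≤ 0) (α : ℝ) :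
    ∫⁻ t in Icc 0 α, (Ici 0).indicator h (t + θ) ≤ ∫⁻ s in Icc 0 α, h s := by
  have hpre : (· + θ) ⁻¹' Icc θ (α + θ) = Icc 0 α := by
    rw [preimage_add_const_Icc, sub_self, add_sub_cancel_right]
  calc ∫⁻ t in Icc 0 α, (Ici 0).indicator h (t + θ)
      = ∫⁻ u in Icc θ (α + θ), (Ici 0).indicator h u := by
        rw [← hpre, (measurePreserving_add_right volume θ).setLIntegral_comp_preimage_emb
          (measurableEmbedding_addRight θ) ((Ici 0).indicator h)]
    _ = ∫⁻ u in Ici 0 ∩ Icc θ (α + θ), h u := setLIntegral_indicator measurableSet_Ici h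
    _ ≤ ∫⁻ s in Icc 0 α, h s := lintegral_mono_set fun u ⟨hu0, hu⟩ => ⟨hu0, by linarith [hu.2]⟩

lemma indicator_rpow_apply {X : Type*} (s : Set X) (h : X → ℝ≥0∞) {p : ℝ} (hp : 0 < p) (x : X) :
    s.indicator h x ^ p = s.indicator (fun y => h y ^ p) x := by
  by_cases hx : x ∈ s <;> simp [hx, ENNReal.zero_rpow_of_pos hp]

/-- The input-output map `(𝔽ψ)(t) = ∫ ψ(t + θ) 1_{t + θ ≥ 0} dν(θ)`, applied to `g = |ψ|`. -/
noncomputable def delayResponse (ν : Measure ℝ) (g : ℝ → ℝ≥0∞) (t : ℝ) : ℝ≥0∞ :=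
  ∫⁻ θ, (Ici 0).indicator g (t + θ) ∂ν

section delayResponse

variable {ν : Measure ℝ} {g : ℝ → ℝ≥0∞} {p : ℝ}

lemma delayResponse_eq_restrict_Ici {t α : ℝ} (ht : t ≤ α) :
    delayResponse ν g t = delayResponse (ν.restrict (Ici (-α))) g t := by
  refine (setLIntegral_eq_of_support_subset fun θ hθ => ?_).symm
  have : 0 ≤ t + θ := by_contra fun h => hθ (indicator_of_notMem h g)
  exact show -α ≤ θ by linarith

lemma lintegral_rpow_delayResponse_le_measure_univ [SFinite ν] (hν : ∀ᵐ θ ∂ν, θ ≤ 0)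
    (hg : Measurable g) (hp : 1 ≤ p) (α : ℝ) :
    ∫⁻ t in Icc 0 α, delayResponse ν g t ^ p ≤ ν univ ^ p * ∫⁻ s in Icc 0 α, g s ^ p := by
  have hp0 : 0 < p := zero_lt_one.trans_le hp
  set G : ℝ → ℝ≥0∞ := (Ici 0).indicator fun s => g s ^ p
  have hG : Measurable G := (hg.pow_const p).indicator measurableSet_Ici
  have hjensen : ∀ t, delayResponse ν g t ^ p ≤ ν univ ^ (p - 1) * ∫⁻ θ, G (t + θ) ∂ν := by
    intro t
    simp only [delayResponse, G, ← indicator_rpow_apply _ _ hp0]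
    exact lintegral_rpow_le_measure_univ_rpow_mul ν
      ((hg.indicator measurableSet_Ici).comp (measurable_const_add t)).aemeasurable hp
  calc ∫⁻ t in Icc 0 α, delayResponse ν g t ^ p
      ≤ ∫⁻ t in Icc 0 α, ν univ ^ (p - 1) * ∫⁻ θ, G (t + θ) ∂ν := lintegral_mono hjensen
    _ = ν univ ^ (p - 1) * ∫⁻ θ, (∫⁻ t in Icc 0 α, G (t + θ)) ∂ν := by
      have hmeas : Measurable fun t => ∫⁻ θ, G (t + θ) ∂ν :=
        (hG.comp measurable_add).lintegral_prod_right'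
      rw [lintegral_const_mul _ hmeas,
        lintegral_lintegral_swap (f := fun t θ => G (t + θ)) (hG.comp measurable_add).aemeasurable]
    _ ≤ ν univ ^ (p - 1) * ∫⁻ _, (∫⁻ s in Icc 0 α, g s ^ p) ∂ν := by
      gcongr ν univ ^ (p - 1) * ?_
      exact lintegral_mono_ae (hν.mono fun θ hθ => setLIntegral_Icc_indicator_Ici_add_le _ hθ α)
    _ = ν univ ^ p * ∫⁻ s in Icc 0 α, g s ^ p := by
      rw [lintegral_const, mul_comm _ (ν univ), ← mul_assoc]
      congr 1
      conv_rhs => rw [← sub_add_cancel p 1]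
      rw [ENNReal.rpow_add_of_nonneg _ _ (by linarith) zero_le_one, ENNReal.rpow_one]

theorem lintegral_rpow_delayResponse_le [SFinite ν] (hν : ∀ᵐ θ ∂ν, θ ≤ 0)
    (hg : Measurable g) (hp : 1 ≤ p) (α : ℝ) :
    ∫⁻ t in Icc 0 α, delayResponse ν g t ^ p ≤ ν (Ici (-α)) ^ p * ∫⁻ s in Icc 0 α, g s ^ p := by
  rw [setLIntegral_congr_fun measurableSet_Icc fun t ht => by
    rw [delayResponse_eq_restrict_Ici ht.2], ← Measure.restrict_apply_univ]
  exact lintegral_rpow_delayResponse_le_measure_univ (ae_restrict_of_ae hν) hg hp α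

end delayResponse

lemma tendsto_measure_Icc_sub_self_nhdsGT (μ : Measure ℝ) [IsFiniteMeasureOnCompacts μ] (b : ℝ) :
    Tendsto (fun δ => μ (Icc (b - δ) b)) (𝓝[>] 0) (𝓝 (μ {b})) := by
  refine tendsto_of_tendsto_of_tendsto_of_le_of_le' tendsto_const_nhds
    (tendsto_measure_Icc_nhdsWithin_right' μ b) ?_ ?_ <;>
  filter_upwards [self_mem_nhdsWithin] with δ (hδ : 0 < δ)
  · exact measure_mono (singleton_subset_iff.2 ⟨by linarith, le_rfl⟩)
  · exact measure_mono (Icc_subset_Icc_right (by linarith))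

theorem stmt_16_general (r : ℝ) (hr : 0 < r) (μ : Measure ℝ) [IsFiniteMeasure μ]
    (p : ℝ) (hp : 1 ≤ p) (ψ : ℝ → ℝ) (hψ : Measurable ψ) (α : ℝ) :
    (∫⁻ t in Set.Icc (0 : ℝ) α,
        (∫⁻ θ in Set.Icc (-r) 0,
          ENNReal.ofReal (|ψ (t + θ)|) * (if 0 ≤ t + θ then 1 else 0) ∂μ) ^ p
      ≤ (μ (Set.Icc (max (-α) (-r)) 0)) ^ p *
        ∫⁻ s in Set.Icc (0 : ℝ) α, ENNReal.ofReal (|ψ s| ^ p)) ∧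
    Tendsto (fun a : ℝ => (μ (Set.Icc (max (-a) (-r)) 0)) ^ p)
      (𝓝[>] (0 : ℝ)) (𝓝 ((μ {0}) ^ p)) := by
  set g : ℝ → ℝ≥0∞ := fun s => ENNReal.ofReal |ψ s|
  have hg : Measurable g := ENNReal.measurable_ofReal.comp hψ.abs
  have hinner : ∀ t, ∫⁻ θ in Icc (-r) 0, ENNReal.ofReal |ψ (t + θ)| *
      (if 0 ≤ t + θ then 1 else 0) ∂μ = delayResponse (μ.restrict (Icc (-r) 0)) g t :=
    fun t => lintegral_congr fun θ => by by_cases h : 0 ≤ t + θ <;> simp [g, h]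
  have hν : ∀ᵐ θ ∂μ.restrict (Icc (-r) 0), θ ≤ 0 :=
    ae_restrict_of_forall_mem measurableSet_Icc fun θ hθ => hθ.2
  refine ⟨?_, ?_⟩
  · simp_rw [hinner]
    convert lintegral_rpow_delayResponse_le hν hg hp α using 2
    · rw [Measure.restrict_apply measurableSet_Ici]
      congr 2
      ext θ
      simp only [mem_inter_iff, mem_Ici, mem_Icc, max_le_iff]
      tauto
    · exact setLIntegral_congr_fun measurableSet_Icc fun s _ =>
        (ENNReal.ofReal_rpow_of_nonneg (abs_nonneg _) (by linarith)).symm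
  · refine ((tendsto_measure_Icc_sub_self_nhdsGT μ 0).congr' ?_).ennrpow_const p
    filter_upwards [Ioo_mem_nhdsGT hr] with a ha
    rw [zero_sub, max_eq_left (neg_le_neg ha.2.le)]

/-- Let `μ` be a finite Borel measure on `ℝ` concentrated on `[-r, 0]`,
`p ≥ 1`, `ψ` measurable, `α > 0`. Then
`∫₀^α (∫_{[-r,0]} |ψ(t+θ)| 1_{t+θ≥0} dμ(θ))^p dt ≤ μ([max(-α,-r),0])^p ∫₀^α |ψ|^p`,
and the constant `μ([max(-α,-r),0])^p` tends to `μ({0})^p` as `α → 0⁺`. -/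
theorem stmt_16 (r : ℝ) (hr : 0 < r) (μ : Measure ℝ) [IsFiniteMeasure μ]
    (hμ : μ (Set.Icc (-r) 0)ᶜ = 0)
    (p : ℝ) (hp : 1 ≤ p) (ψ : ℝ → ℝ) (hψ : Measurable ψ) (α : ℝ) (hα : 0 < α) :
    (∫⁻ t in Set.Icc (0 : ℝ) α,
        (∫⁻ θ in Set.Icc (-r) 0,
          ENNReal.ofReal (|ψ (t + θ)|) * (if 0 ≤ t + θ then 1 else 0) ∂μ) ^ p
      ≤ (μ (Set.Icc (max (-α) (-r)) 0)) ^ p *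
        ∫⁻ s in Set.Icc (0 : ℝ) α, ENNReal.ofReal (|ψ s| ^ p)) ∧
    Tendsto (fun a : ℝ => (μ (Set.Icc (max (-a) (-r)) 0)) ^ p)
      (𝓝[>] (0 : ℝ)) (𝓝 ((μ {0}) ^ p)) :=
  stmt_16_general r hr μ p hp ψ hψ α
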